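/- arXiv:2012.08389 — 7 statements merged into one kernel-verified Lean document; each statement's English description precedes it below -/
import Mathlib

section
/- Let A ∈ ℝ^{n×n} be a matrix with nonnegative entries, D = diag(A𝟏) the diagonal matrix of its row sums, and L = D − A the associated graph Laplacian. Then the eigenvalue 0 of L is semisimple, in the sense that ker(L²) = ker(L); equivalently, for every vector v ∈ ℝⁿ, if L(Lv) = 0 then Lv = 0. -/
open Matrix

/-- The eigenvalue `0` of the graph Laplacian `L = D - A` of a nonnegative matrix `A`
is semisimple: `ker (L²) = ker L`, i.e. `L (L v) = 0` implies `L v = 0`. -/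
theorem laplacian_zero_eigenvalue_semisimple {n : ℕ}
    (A : Matrix (Fin n) (Fin n) ℝ) (hA : ∀ i j, 0 ≤ A i j)
    (D : Matrix (Fin n) (Fin n) ℝ) (hD : D = Matrix.diagonal (fun i => ∑ j, A i j))
    (L : Matrix (Fin n) (Fin n) ℝ) (hL : L = D - A)
    (v : Fin n → ℝ) (h : L *ᵥ (L *ᵥ v) = 0) :
    L *ᵥ v = 0 := by
  subst hD hL
  set M : Fin n → ℝ := fun i => ∑ j, A i j with hM
  set S : ℝ := ∑ i, ∑ j, A i j with hS
  have hMnn : ∀ i, 0 ≤ M i := fun i => Finset.sum_nonneg fun j _ => hA i j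
  have hS0 : 0 ≤ S := Finset.sum_nonneg fun i _ => hMnn i
  have hMS : ∀ i, M i ≤ S :=
    fun i => Finset.single_le_sum (f := fun i => M i) (fun i _ => hMnn i) (Finset.mem_univ i)
  set t : ℝ := 1 / (1 + S) with ht
  have htpos : 0 < t := by positivity
  set L : Matrix (Fin n) (Fin n) ℝ := Matrix.diagonal M - A with hLdef
  set P : Matrix (Fin n) (Fin n) ℝ := 1 - t • L with hP
  have hPnn : ∀ i j, 0 ≤ P i j := by
    intro i j
    by_cases hij : i = j
    · subst hij
      have : P i i = 1 - t * (M i - A i i) := by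
        simp [hP, hLdef, Matrix.sub_apply, Matrix.one_apply, Matrix.smul_apply,
          Matrix.diagonal_apply_eq]
      rw [this]
      have h1 : t * (M i - A i i) ≤ t * M i := by
        apply mul_le_mul_of_nonneg_left _ htpos.le
        linarith [hA i i]
      have h2 : t * M i ≤ t * S := mul_le_mul_of_nonneg_left (hMS i) htpos.le
      have h3 : t * S < 1 := by
        rw [ht]
        rw [div_mul_eq_mul_div, one_mul, div_lt_one (by linarith)]
        linarith
      linarith
    · have : P i j = t * A i j := by
        simp [hP, hLdef, Matrix.sub_apply, Matrix.one_apply_ne hij, Matrix.smul_apply,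
          Matrix.diagonal_apply_ne _ hij]
      rw [this]
      exact mul_nonneg htpos.le (hA i j)
  have hLrow : ∀ i, ∑ j, L i j = 0 := by
    intro i
    simp only [hLdef, Matrix.sub_apply, Finset.sum_sub_distrib]
    rw [Finset.sum_eq_single i (fun b _ hb => Matrix.diagonal_apply_ne' _ hb)
      (fun hi => absurd (Finset.mem_univ i) hi)]
    simp [hM]
  have hProw : ∀ i, ∑ j, P i j = 1 := by
    intro i
    simp only [hP, Matrix.sub_apply, Matrix.smul_apply, smul_eq_mul,
      Finset.sum_sub_distrib, ← Finset.mul_sum, hLrow i, mul_zero, sub_zero]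
    simp [Matrix.one_apply]
  -- contraction in sup norm
  have key : ∀ (x : Fin n → ℝ) (B : ℝ), (∀ j, |x j| ≤ B) → ∀ i, |(P *ᵥ x) i| ≤ B := by
    intro x B hB i
    have h1 : (P *ᵥ x) i = ∑ j, P i j * x j := rfl
    rw [h1]
    calc |∑ j, P i j * x j| ≤ ∑ j, |P i j * x j| := Finset.abs_sum_le_sum_abs _ _
      _ = ∑ j, P i j * |x j| := by
          refine Finset.sum_congr rfl fun j _ => ?_
          rw [abs_mul, abs_of_nonneg (hPnn i j)]
      _ ≤ ∑ j, P i j * B := Finset.sum_le_sum fun j _ =>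
          mul_le_mul_of_nonneg_left (hB j) (hPnn i j)
      _ = B := by rw [← Finset.sum_mul, hProw, one_mul]
  set w : Fin n → ℝ := L *ᵥ v with hw
  have hPw : P *ᵥ w = w := by
    simp [hP, Matrix.sub_mulVec, Matrix.one_mulVec, Matrix.smul_mulVec, h]
  have hPv : P *ᵥ v = v - t • w := by
    simp [hP, Matrix.sub_mulVec, Matrix.one_mulVec, Matrix.smul_mulVec, hw]
  set B : ℝ := ∑ j, |v j| with hBdef
  have hB : ∀ j, |v j| ≤ B :=
    fun j => Finset.single_le_sum (f := fun j => |v j|) (fun j _ => abs_nonneg _)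
      (Finset.mem_univ j)
  have iter : ∀ k : ℕ, ∀ j, |(v - ((k : ℝ) * t) • w) j| ≤ B := by
    intro k
    induction k with
    | zero => simpa using hB
    | succ k ih =>
      have hstep : v - (((k + 1 : ℕ) : ℝ) * t) • w = P *ᵥ (v - ((k : ℝ) * t) • w) := by
        rw [Matrix.mulVec_sub, hPv, Matrix.mulVec_smul, hPw]
        push_cast
        funext j
        simp only [Pi.sub_apply, Pi.smul_apply, smul_eq_mul]
        ring
      intro j
      rw [hstep]
      exact key _ B ih j
  show w = 0
  funext i
  by_contra hwi
  have hwi' : 0 < t * |w i| := mul_pos htpos (abs_pos.mpr hwi)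
  obtain ⟨k, hk⟩ := exists_nat_gt ((B + |v i|) / (t * |w i|))
  have h1 : |((k : ℝ) * t) * w i| ≤ |v i| + B := by
    have := iter k i
    simp only [Pi.sub_apply, Pi.smul_apply, smul_eq_mul] at this
    calc |(k : ℝ) * t * w i| = |v i - (v i - (k : ℝ) * t * w i)| := by ring_nf
      _ ≤ |v i| + |v i - (k : ℝ) * t * w i| := abs_sub _ _
      _ ≤ |v i| + B := by linarith
  have h2 : (k : ℝ) * (t * |w i|) ≤ |v i| + B := by
    rw [abs_mul, abs_mul, abs_of_nonneg (by positivity : (0:ℝ) ≤ (k:ℝ)),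
      abs_of_nonneg htpos.le] at h1
    linarith [h1]
  have h3 : (B + |v i|) < (k : ℝ) * (t * |w i|) := by
    rw [div_lt_iff₀ hwi'] at hk
    linarith
  linarith
end

section
/- Let A ∈ ℝ^{n×n} and let x, z ∈ ℝⁿ satisfy A x = 0, zᵀ A = 0ᵀ, and zᵀ x = 1. Then for every θ ∈ ℝ, exp(A + θ x zᵀ) = exp(A) + (e^θ − 1) x zᵀ. -/
/-!
Put `P = x zᵀ`. Then `A P = P A = 0` and `P² = (zᵀ x) P = P`, so `A` commutes with `θ P` and
`exp (A + θ P) = exp A * exp (θ P)`. Both factors are computed from one observation: if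
`a b = c b` for a scalar `c`, then `exp a * b = e^c b`. Applied to the splitting
`1 = (1 - P) + P` it gives `exp (θ P) = (1 - P) + e^θ P`, and applied to `A P = 0` it gives
`exp A * P = P`.
-/

open Matrix

theorem pow_mul_eq_smul_of_mul_eq_smul {R M : Type*} [Monoid R] [Monoid M] [MulAction R M]
    [SMulCommClass R M M] {a b : M} {c : R} (h : a * b = c • b) (n : ℕ) :
    a ^ n * b = c ^ n • b := by
  induction n with
  | zero => simp
  | succ n ih => rw [pow_succ, mul_assoc, h, mul_smul_comm, ih, smul_smul, ← pow_succ']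

namespace NormedSpace

variable {𝔸 : Type*} [NormedRing 𝔸] [CompleteSpace 𝔸]

theorem exp_mul_eq_smul_of_mul_eq_smul {𝕂 : Type*} [RCLike 𝕂] [NormedAlgebra 𝕂 𝔸] {a b : 𝔸} {c : 𝕂}
    (h : a * b = c • b) : exp a * b = exp c • b := by
  have hterms : ∀ n : ℕ,
      ((n.factorial : 𝕂)⁻¹ • a ^ n) * b = ((n.factorial : 𝕂)⁻¹ • c ^ n) • b := fun n => by
    rw [smul_mul_assoc, pow_mul_eq_smul_of_mul_eq_smul h, smul_smul, smul_eq_mul]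
  have hsum := (exp_series_hasSum_exp' (𝕂 := 𝕂) a).mul_right b
  simp only [hterms] at hsum
  exact hsum.unique ((exp_series_hasSum_exp' c).smul_const b)

theorem exp_mul_eq_self_of_mul_eq_zero (𝕂 : Type*) [RCLike 𝕂] [NormedAlgebra 𝕂 𝔸] {a b : 𝔸}
    (h : a * b = 0) : exp a * b = b := by
  have := exp_mul_eq_smul_of_mul_eq_smul (c := (0 : 𝕂)) (by rw [h, zero_smul])
  rwa [exp_zero, one_smul] at this

theorem exp_smul_of_isIdempotentElem {𝕂 : Type*} [RCLike 𝕂] [NormedAlgebra 𝕂 𝔸] {p : 𝔸}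
    (hp : IsIdempotentElem p) (t : 𝕂) :
    exp (t • p) = 1 + (exp t - 1) • p := by
  have on_range : exp (t • p) * p = exp t • p :=
    exp_mul_eq_smul_of_mul_eq_smul (by rw [smul_mul_assoc, hp.eq])
  have on_kernel : exp (t • p) * (1 - p) = 1 - p :=
    exp_mul_eq_self_of_mul_eq_zero 𝕂 <| by
      rw [smul_mul_assoc, mul_sub, mul_one, hp.eq, sub_self, smul_zero]
  calc exp (t • p) = exp (t • p) * (1 - p) + exp (t • p) * p := by
        rw [← mul_add, sub_add_cancel, mul_one]
    _ = 1 + (exp t - 1) • p := by rw [on_range, on_kernel, sub_smul, one_smul]; abel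

end NormedSpace

/-- Rank-one shift identity for the matrix exponential: if `A x = 0`, `zᵀ A = 0` and
`zᵀ x = 1`, then `exp (A + θ x zᵀ) = exp A + (e^θ - 1) x zᵀ`. -/
theorem rank_one_shift_exp {n : ℕ}
    (A : Matrix (Fin n) (Fin n) ℝ) (x z : Fin n → ℝ)
    (hx : A *ᵥ x = 0) (hz : z ᵥ* A = 0) (hzx : z ⬝ᵥ x = 1)
    (θ : ℝ) :
    NormedSpace.exp (A + θ • Matrix.vecMulVec x z)
      = NormedSpace.exp A + (Real.exp θ - 1) • Matrix.vecMulVec x z := by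
  -- `exp` is defined topologically, so any submultiplicative norm may be chosen here.
  let _ : NormedRing (Matrix (Fin n) (Fin n) ℝ) := Matrix.linftyOpNormedRing
  let _ : NormedAlgebra ℝ (Matrix (Fin n) (Fin n) ℝ) := Matrix.linftyOpNormedAlgebra
  set P := vecMulVec x z
  have hAP : A * P = 0 := by rw [mul_vecMulVec, hx, zero_vecMulVec]
  have hPA : P * A = 0 := by rw [vecMulVec_mul, hz, vecMulVec_zero]
  have hPP : IsIdempotentElem P := by
    rw [IsIdempotentElem, vecMulVec_mul_vecMulVec, hzx, one_smul]
  have hexpP : NormedSpace.exp (θ • P) = 1 + (Real.exp θ - 1) • P := by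
    rw [Real.exp_eq_exp_ℝ]
    exact NormedSpace.exp_smul_of_isIdempotentElem hPP θ
  have hexpA : NormedSpace.exp A * P = P :=
    NormedSpace.exp_mul_eq_self_of_mul_eq_zero ℝ hAP
  rw [Matrix.exp_add_of_commute A _ (Commute.smul_right (hAP.trans hPA.symm) θ), hexpP,
    mul_add, mul_one, mul_smul_comm, hexpA]
end

section
/- Let L ∈ ℝ^{n×n} and z ∈ ℝⁿ satisfy: L𝟏 = 0, Lᵀz = 0, 𝟏ᵀz = 1, ker(L) = span{𝟏}, ker(Lᵀ) = span{z}, and ker((Lᵀ)²) = ker(Lᵀ) (i.e., 0 is a simple semisimple eigenvalue). Then ξ (Lᵀ − ξI)⁻¹ converges to −z 𝟏ᵀ as ξ → 0 from the left (ξ < 0). -/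
/-!
With `P = z 𝟏ᵀ` one has `Lᵀ P = P Lᵀ = 0` and `P² = P`, and `Lᵀ + P` is invertible because
`ker Lᵀ = span{z}` is fixed by `P`. The shifted matrix `B ξ = Lᵀ + P - ξ I` satisfies
`B ξ P = P B ξ = (1 - ξ) P`, which gives the exact formula
`(Lᵀ - ξ I)⁻¹ = (B ξ)⁻¹ - (ξ (1 - ξ))⁻¹ P`.
Since `B 0` is invertible, `ξ (B ξ)⁻¹ → 0`, hence `ξ (Lᵀ - ξ I)⁻¹ → -P`.
-/

open Matrix Filter Topology

namespace Matrix

variable {ι : Type*} [Fintype ι] [DecidableEq ι]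

section Field

variable {K : Type*} [Field K] {M P : Matrix ι ι K}

theorem isUnit_det_add_of_mulVec_eq_zero (hPM : P * M = 0) (hPP : P * P = P)
    (hker : ∀ v, M *ᵥ v = 0 → P *ᵥ v = v) : IsUnit (M + P).det := by
  refine isUnit_iff_ne_zero.2 fun hdet => ?_
  obtain ⟨v, hv0, hv⟩ := exists_mulVec_eq_zero_iff.2 hdet
  have hPv : P *ᵥ v = 0 := by
    simpa [mulVec_mulVec, Matrix.mul_add, hPM, hPP] using congrArg (P *ᵥ ·) hv
  have hMv : M *ᵥ v = 0 := by simpa [add_mulVec, hPv] using hv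
  exact hv0 ((hker v hMv).symm.trans hPv)

theorem inv_sub_smul_one_eq (hMP : M * P = 0) (hPM : P * M = 0) (hPP : P * P = P) {ξ : K}
    (hξ : ξ ≠ 0) (hξ1 : 1 - ξ ≠ 0) (hB : IsUnit (M + P - ξ • 1).det) :
    (M - ξ • 1)⁻¹ = (M + P - ξ • 1)⁻¹ - (ξ * (1 - ξ))⁻¹ • P := by
  set B := M + P - ξ • 1
  have hBP : B * P = (1 - ξ) • P := by
    simp only [B, Matrix.sub_mul, Matrix.add_mul, hMP, hPP, Matrix.smul_mul, Matrix.one_mul,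
      zero_add, sub_smul, one_smul]
  have hPB : P * B = (1 - ξ) • P := by
    simp only [B, Matrix.mul_sub, Matrix.mul_add, hPM, hPP, Matrix.mul_smul, Matrix.mul_one,
      zero_add, sub_smul, one_smul]
  have hPBinv : P * B⁻¹ = (1 - ξ)⁻¹ • P := by
    rw [← inv_smul_smul₀ hξ1 (P * B⁻¹), ← Matrix.smul_mul, ← hPB, Matrix.mul_assoc,
      mul_nonsing_inv _ hB, Matrix.mul_one]
  have hcoef : (ξ * (1 - ξ))⁻¹ * (1 - ξ) + (1 - ξ)⁻¹ - (ξ * (1 - ξ))⁻¹ = 0 := by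
    field_simp
    ring
  refine inv_eq_right_inv ?_
  calc (M - ξ • 1) * (B⁻¹ - (ξ * (1 - ξ))⁻¹ • P)
      = (B - P) * (B⁻¹ - (ξ * (1 - ξ))⁻¹ • P) := by simp only [B]; abel_nf
    _ = 1 - ((ξ * (1 - ξ))⁻¹ * (1 - ξ) + (1 - ξ)⁻¹ - (ξ * (1 - ξ))⁻¹) • P := by
        simp only [Matrix.sub_mul, Matrix.mul_sub, mul_nonsing_inv _ hB, Matrix.mul_smul, hBP,
          hPBinv, hPP]
        module
    _ = 1 := by rw [hcoef, zero_smul, sub_zero]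

end Field

variable {𝕜 : Type*} [NormedField 𝕜] {M P : Matrix ι ι 𝕜}

theorem tendsto_smul_inv_sub_smul_one (hMP : M * P = 0) (hPM : P * M = 0) (hPP : P * P = P)
    (hunit : IsUnit (M + P).det) :
    Tendsto (fun ξ : 𝕜 => ξ • (M - ξ • 1)⁻¹) (𝓝[≠] 0) (𝓝 (-P)) := by
  have hB : Continuous fun ξ : 𝕜 => M + P - ξ • 1 := by fun_prop
  have hB0 : (M + P - (0 : 𝕜) • 1) = M + P := by simp
  have hdet : ∀ᶠ ξ in 𝓝 (0 : 𝕜), IsUnit (M + P - ξ • 1).det := by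
    have := hB.matrix_det.continuousAt.eventually_ne (by rw [hB0]; exact hunit.ne_zero)
    exact this.mono fun ξ h => isUnit_iff_ne_zero.2 h
  have hinv : ContinuousAt (fun ξ : 𝕜 => (M + P - ξ • 1)⁻¹) 0 := by
    refine ContinuousAt.comp (f := fun ξ : 𝕜 => M + P - ξ • 1) ?_ hB.continuousAt
    rw [hB0]
    refine continuousAt_matrix_inv _ ?_
    rw [Ring.inverse_eq_inv']
    exact continuousAt_inv₀ hunit.ne_zero
  have hlim : Tendsto (fun ξ : 𝕜 => ξ • (M + P - ξ • 1)⁻¹ - (1 - ξ)⁻¹ • P) (𝓝 0) (𝓝 (-P)) := by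
    have hscalar : ContinuousAt (fun ξ : 𝕜 => (1 - ξ)⁻¹) 0 :=
      (continuousAt_const.sub continuousAt_id).inv₀ (by simp)
    simpa using (tendsto_id.smul hinv.tendsto).sub (hscalar.tendsto.smul_const P)
  have hformula : ∀ᶠ ξ in 𝓝[≠] (0 : 𝕜),
      ξ • (M + P - ξ • 1)⁻¹ - (1 - ξ)⁻¹ • P = ξ • (M - ξ • 1)⁻¹ := by
    filter_upwards [self_mem_nhdsWithin, nhdsWithin_le_nhds hdet,
      nhdsWithin_le_nhds (eventually_ne_nhds (one_ne_zero (α := 𝕜)).symm)] with ξ hξ hξB hξ1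
    have hξ1' : 1 - ξ ≠ 0 := sub_ne_zero.2 (Ne.symm hξ1)
    rw [inv_sub_smul_one_eq hMP hPM hPP hξ hξ1' hξB, smul_sub, smul_smul, mul_inv,
      ← mul_assoc, mul_inv_cancel₀ hξ, one_mul]
  exact (hlim.mono_left nhdsWithin_le_nhds).congr' hformula

end Matrix

theorem resolvent_limit_at_zero_general {n : ℕ}
    (L : Matrix (Fin n) (Fin n) ℝ) (z : Fin n → ℝ)
    (hL1 : L *ᵥ (fun _ => (1 : ℝ)) = 0)
    (hz : Lᵀ *ᵥ z = 0) (hz1 : (fun _ => (1 : ℝ)) ⬝ᵥ z = 1)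
    (hkerLT : ∀ v : Fin n → ℝ, Lᵀ *ᵥ v = 0 ↔ ∃ c : ℝ, v = c • z) :
    Filter.Tendsto
      (fun ξ : ℝ => ξ • (Lᵀ - ξ • (1 : Matrix (Fin n) (Fin n) ℝ))⁻¹)
      (nhdsWithin 0 (Set.Iio 0))
      (nhds (-(Matrix.vecMulVec z (fun _ => (1 : ℝ))))) := by
  set P := vecMulVec z (fun _ => (1 : ℝ))
  have hMP : Lᵀ * P = 0 := by rw [mul_vecMulVec, hz, zero_vecMulVec]
  have hPM : P * Lᵀ = 0 := by rw [vecMulVec_mul, vecMul_transpose, hL1, vecMulVec_zero]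
  have hPP : P * P = P := by rw [vecMulVec_mul_vecMulVec, hz1, one_smul]
  have hker : ∀ v, Lᵀ *ᵥ v = 0 → P *ᵥ v = v := by
    intro v hv
    obtain ⟨c, rfl⟩ := (hkerLT v).1 hv
    rw [mulVec_smul, vecMulVec_mulVec, hz1]
    simp
  exact (tendsto_smul_inv_sub_smul_one hMP hPM hPP
    (isUnit_det_add_of_mulVec_eq_zero hPM hPP hker)).mono_left
    (nhdsWithin_mono _ fun _ h => ne_of_lt h)

/-- If `0` is a simple semisimple eigenvalue of the Laplacian `L`, with `L 𝟏 = 0`,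
`Lᵀ z = 0`, `𝟏ᵀ z = 1`, `ker L = span{𝟏}` and `ker Lᵀ = span{z}`, then
`ξ (Lᵀ - ξ I)⁻¹ → -z 𝟏ᵀ` as `ξ → 0⁻`. -/
theorem resolvent_limit_at_zero {n : ℕ}
    (L : Matrix (Fin n) (Fin n) ℝ) (z : Fin n → ℝ)
    (hL1 : L *ᵥ (fun _ => (1 : ℝ)) = 0)
    (hz : Lᵀ *ᵥ z = 0) (hz1 : (fun _ => (1 : ℝ)) ⬝ᵥ z = 1)
    (hkerL : ∀ v : Fin n → ℝ, L *ᵥ v = 0 ↔ ∃ c : ℝ, v = c • (fun _ => (1 : ℝ)))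
    (hkerLT : ∀ v : Fin n → ℝ, Lᵀ *ᵥ v = 0 ↔ ∃ c : ℝ, v = c • z)
    (hsemi : ∀ v : Fin n → ℝ, Lᵀ *ᵥ (Lᵀ *ᵥ v) = 0 → Lᵀ *ᵥ v = 0) :
    Filter.Tendsto
      (fun ξ : ℝ => ξ • (Lᵀ - ξ • (1 : Matrix (Fin n) (Fin n) ℝ))⁻¹)
      (nhdsWithin 0 (Set.Iio 0))
      (nhds (-(Matrix.vecMulVec z (fun _ => (1 : ℝ))))) :=
  resolvent_limit_at_zero_general L z hL1 hz hz1 hkerLT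
end

section
/- Let A ∈ ℝ^{n×n}, let x ∈ ℝⁿ be a unit vector with xᵀA = λxᵀ for some λ ∈ ℝ, and let Q ∈ ℝ^{n×(n−1)} satisfy QᵀQ = I_{n−1} and QQᵀ = I_n − x xᵀ. Then for every v ∈ ℝⁿ with xᵀv = 0, exp(A) v = Q exp(QᵀAQ) Qᵀ v. -/
open Matrix

/-! The projector `Q Qᵀ = 1 - x xᵀ` has range `x^⊥`, which is `A`-invariant because `x` is a left
eigenvector. Hence `Q` intertwines the compression `Qᵀ A Q` with `A`, i.e. `Q (Qᵀ A Q) = A Q`, so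
`Q exp(Qᵀ A Q) = exp(A) Q` termwise in the exponential series. Multiplying on the right by `Qᵀ`
and applying the result to `v = Q Qᵀ v` gives the identity. -/

namespace Matrix

section Projector

variable {m α : Type*} [Fintype m] [DecidableEq m] [CommRing α] {x : m → α}

theorem vecMul_one_sub_vecMulVec_self (hx : x ⬝ᵥ x = 1) : x ᵥ* (1 - vecMulVec x x) = 0 := by
  rw [vecMul_sub, vecMul_one, vecMul_vecMulVec, hx, one_smul, sub_self]

theorem one_sub_vecMulVec_self_mulVec {v : m → α} (hv : x ⬝ᵥ v = 0) :
    (1 - vecMulVec x x) *ᵥ v = v := by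
  rw [sub_mulVec, one_mulVec, vecMulVec_mulVec, hv, MulOpposite.op_zero, zero_smul, sub_zero]

/-- The orthogonal complement of a unit left eigenvector is an invariant subspace. -/
theorem one_sub_vecMulVec_self_mul_mul_self (hx : x ⬝ᵥ x = 1) {A : Matrix m m α} {lam : α}
    (hxA : x ᵥ* A = lam • x) :
    (1 - vecMulVec x x) * A * (1 - vecMulVec x x) = A * (1 - vecMulVec x x) := by
  rw [sub_mul, one_mul, vecMulVec_mul, hxA, sub_mul, vecMulVec_mul, smul_vecMul,
    vecMul_one_sub_vecMulVec_self hx, smul_zero, vecMulVec_zero, sub_zero]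

end Projector

theorem mul_mul_mul_eq_mul_of_invariant {m k α : Type*} [Fintype m] [Fintype k] [DecidableEq k]
    [Semiring α] {A : Matrix m m α} {Q : Matrix m k α} {R : Matrix k m α} (hRQ : R * Q = 1)
    (hA : Q * R * A * (Q * R) = A * (Q * R)) : Q * (R * A * Q) = A * Q :=
  calc Q * (R * A * Q) = Q * R * A * (Q * R) * Q := by
        simp only [Matrix.mul_assoc, hRQ, Matrix.mul_one]
    _ = A * Q := by rw [hA, Matrix.mul_assoc, Matrix.mul_assoc, hRQ, Matrix.mul_one]

theorem mul_pow_eq_pow_mul_of_mul_eq {m k α : Type*} [Fintype m] [DecidableEq m] [Fintype k]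
    [DecidableEq k] [Semiring α] {A : Matrix m m α} {B : Matrix k k α} {Q : Matrix m k α}
    (h : Q * B = A * Q) (j : ℕ) : Q * B ^ j = A ^ j * Q := by
  induction j with
  | zero => simp
  | succ j ih => rw [pow_succ, ← Matrix.mul_assoc, ih, Matrix.mul_assoc, h, ← Matrix.mul_assoc,
      ← pow_succ]

theorem mul_exp_eq_exp_mul_of_mul_eq {m k 𝕂 : Type*} [Fintype m] [DecidableEq m] [Fintype k]
    [DecidableEq k] [RCLike 𝕂] {A : Matrix m m 𝕂} {B : Matrix k k 𝕂} {Q : Matrix m k 𝕂}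
    (h : Q * B = A * Q) : Q * NormedSpace.exp B = NormedSpace.exp A * Q := by
  -- `exp` does not depend on a norm; the ℓ∞ operator norm only serves to sum the series.
  let _ : NormedRing (Matrix m m 𝕂) := Matrix.linftyOpNormedRing
  let _ : NormedAlgebra 𝕂 (Matrix m m 𝕂) := Matrix.linftyOpNormedAlgebra
  let _ : NormedRing (Matrix k k 𝕂) := Matrix.linftyOpNormedRing
  let _ : NormedAlgebra 𝕂 (Matrix k k 𝕂) := Matrix.linftyOpNormedAlgebra
  have : ProperSpace (Matrix m m 𝕂) := FiniteDimensional.proper_rclike 𝕂 _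
  have : ProperSpace (Matrix k k 𝕂) := FiniteDimensional.proper_rclike 𝕂 _
  calc Q * NormedSpace.exp B = ∑' j : ℕ, Q * ((j.factorial⁻¹ : 𝕂) • B ^ j) := by
        rw [NormedSpace.exp_eq_tsum 𝕂]
        exact (NormedSpace.expSeries_summable' (𝕂 := 𝕂) B).map_tsum (addMonoidHomMulLeft Q)
          (continuous_const.matrix_mul continuous_id)
    _ = ∑' j : ℕ, ((j.factorial⁻¹ : 𝕂) • A ^ j) * Q := by
        simp_rw [Matrix.mul_smul, smul_mul, mul_pow_eq_pow_mul_of_mul_eq h]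
    _ = NormedSpace.exp A * Q := by
        rw [NormedSpace.exp_eq_tsum 𝕂]
        exact ((NormedSpace.expSeries_summable' (𝕂 := 𝕂) A).map_tsum (addMonoidHomMulRight Q)
          (continuous_id.matrix_mul continuous_const)).symm

end Matrix

/-- Projection identity for the matrix exponential: if `x` is a unit left eigenvector
of `A` and the columns of `Q` form an orthonormal basis of `span{x}ᗮ`, then for every
`v ⊥ x` one has `exp(A) v = Q exp(Qᵀ A Q) Qᵀ v`. -/
theorem exp_projected_identity {n : ℕ}
    (A : Matrix (Fin n) (Fin n) ℝ) (x : Fin n → ℝ) (hx : x ⬝ᵥ x = 1)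
    (lam : ℝ) (hxA : x ᵥ* A = lam • x)
    (Q : Matrix (Fin n) (Fin (n - 1)) ℝ)
    (hQ1 : Qᵀ * Q = 1)
    (hQ2 : Q * Qᵀ = 1 - Matrix.vecMulVec x x)
    (v : Fin n → ℝ) (hv : x ⬝ᵥ v = 0) :
    NormedSpace.exp A *ᵥ v
      = Q *ᵥ (NormedSpace.exp (Qᵀ * A * Q) *ᵥ (Qᵀ *ᵥ v)) := by
  have hinv : Q * Qᵀ * A * (Q * Qᵀ) = A * (Q * Qᵀ) := by
    rw [hQ2]
    exact one_sub_vecMulVec_self_mul_mul_self hx hxA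
  have hintertwine : Q * (Qᵀ * A * Q) = A * Q := mul_mul_mul_eq_mul_of_invariant hQ1 hinv
  calc NormedSpace.exp A *ᵥ v = NormedSpace.exp A *ᵥ ((Q * Qᵀ) *ᵥ v) := by
        rw [hQ2, one_sub_vecMulVec_self_mulVec hv]
    _ = (Q * NormedSpace.exp (Qᵀ * A * Q) * Qᵀ) *ᵥ v := by
        rw [mul_exp_eq_exp_mul_of_mul_eq hintertwine, mulVec_mulVec, Matrix.mul_assoc]
    _ = Q *ᵥ (NormedSpace.exp (Qᵀ * A * Q) *ᵥ (Qᵀ *ᵥ v)) := by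
        rw [mulVec_mulVec, mulVec_mulVec]
end

section
/- Let A ∈ ℝ^{n×n}, let x ∈ ℝⁿ be a unit vector with xᵀA = λxᵀ for some λ ∈ ℝ, and let Q ∈ ℝ^{n×(n−1)} satisfy QᵀQ = I_{n−1} and QQᵀ = I_n − x xᵀ. If ξ ∈ ℝ with ξ ≠ λ and A − ξI invertible, then QᵀAQ − ξ I_{n−1} is invertible and (QᵀAQ − ξ I_{n−1})⁻¹ = Qᵀ (A − ξ I_n)⁻¹ Q. -/
open Matrix

private lemma vecMulVec_mul_aux {n m : ℕ} (x y : Fin n → ℝ)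
    (M : Matrix (Fin n) (Fin m) ℝ) :
    Matrix.vecMulVec x y * M = Matrix.vecMulVec x (y ᵥ* M) := by
  ext i j
  simp [Matrix.mul_apply, Matrix.vecMulVec_apply, Matrix.vecMul, dotProduct,
    Finset.mul_sum, mul_assoc]

/-- Projected resolvent identity: if `x` is a unit left eigenvector of `A`, the columns
of `Q` form an orthonormal basis of `span{x}ᗮ`, `ξ ≠ λ` and `A - ξI` is invertible,
then `Qᵀ A Q - ξ I` is invertible with inverse `Qᵀ (A - ξI)⁻¹ Q`. -/
theorem projected_resolvent_identity {n : ℕ}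
    (A : Matrix (Fin n) (Fin n) ℝ) (x : Fin n → ℝ) (hx : x ⬝ᵥ x = 1)
    (lam : ℝ) (hxA : x ᵥ* A = lam • x)
    (Q : Matrix (Fin n) (Fin (n - 1)) ℝ)
    (hQ1 : Qᵀ * Q = 1)
    (hQ2 : Q * Qᵀ = 1 - Matrix.vecMulVec x x)
    (ξ : ℝ) (hξ : ξ ≠ lam)
    (hinv : IsUnit (A - ξ • (1 : Matrix (Fin n) (Fin n) ℝ))) :
    IsUnit (Qᵀ * A * Q - ξ • (1 : Matrix (Fin (n - 1)) (Fin (n - 1)) ℝ)) ∧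
      (Qᵀ * A * Q - ξ • (1 : Matrix (Fin (n - 1)) (Fin (n - 1)) ℝ))⁻¹
        = Qᵀ * (A - ξ • (1 : Matrix (Fin n) (Fin n) ℝ))⁻¹ * Q := by
  set B : Matrix (Fin n) (Fin n) ℝ := A - ξ • 1 with hB
  have hc : lam - ξ ≠ 0 := sub_ne_zero.2 (Ne.symm hξ)
  have hdet : IsUnit B.det := (Matrix.isUnit_iff_isUnit_det B).1 hinv
  have hBB : B * B⁻¹ = 1 := Matrix.mul_nonsing_inv B hdet
  have hBB' : B⁻¹ * B = 1 := Matrix.nonsing_inv_mul B hdet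
  have hsm1 : x ᵥ* (ξ • (1 : Matrix (Fin n) (Fin n) ℝ)) = ξ • x := by
    ext j
    simp [Matrix.vecMul, dotProduct, Matrix.one_apply, mul_comm]
  have hxB : x ᵥ* B = (lam - ξ) • x := by
    rw [hB, Matrix.vecMul_sub, hxA, hsm1, sub_smul]
  have hxBinv : x ᵥ* B⁻¹ = (lam - ξ)⁻¹ • x := by
    have h1 : ((lam - ξ) • x) ᵥ* B⁻¹ = x ᵥ* (B * B⁻¹) := by
      rw [← hxB, Matrix.vecMul_vecMul]
    rw [hBB, Matrix.vecMul_one, Matrix.smul_vecMul] at h1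
    have h2 := congrArg (fun v => (lam - ξ)⁻¹ • v) h1
    simpa [smul_smul, inv_mul_cancel₀ hc] using h2
  have hxQ : x ᵥ* Q = 0 := by
    have hxxx : x ᵥ* Matrix.vecMulVec x x = x := by
      ext j
      simp only [Matrix.vecMul, dotProduct, Matrix.vecMulVec_apply]
      have e : ∀ i, x i * (x i * x j) = x i * x i * x j := fun i => by ring
      simp_rw [e, ← Finset.sum_mul]
      have : ∑ i, x i * x i = 1 := hx
      rw [this, one_mul]
    have h1 : x ᵥ* (Q * Qᵀ) = 0 := by
      rw [hQ2, Matrix.vecMul_sub, Matrix.vecMul_one, hxxx, sub_self]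
    calc x ᵥ* Q = (x ᵥ* Q) ᵥ* (Qᵀ * Q) := by rw [hQ1, Matrix.vecMul_one]
      _ = (x ᵥ* (Q * Qᵀ)) ᵥ* Q := by
          rw [Matrix.vecMul_vecMul, Matrix.vecMul_vecMul, Matrix.mul_assoc]
      _ = 0 := by rw [h1, Matrix.zero_vecMul]
  have hMB : Qᵀ * A * Q - ξ • (1 : Matrix (Fin (n - 1)) (Fin (n - 1)) ℝ)
      = Qᵀ * B * Q := by
    rw [hB]
    rw [Matrix.mul_sub, Matrix.sub_mul]
    congr 1
    rw [Matrix.mul_smul, Matrix.smul_mul, Matrix.mul_one, hQ1]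
  have hv0 : Matrix.vecMulVec x (0 : Fin (n - 1) → ℝ) = 0 := by
    ext i j
    simp [Matrix.vecMulVec_apply]
  have hright : (Qᵀ * B * Q) * (Qᵀ * B⁻¹ * Q) = 1 := by
    have hxBQ : x ᵥ* (B⁻¹ * Q) = 0 := by
      rw [← Matrix.vecMul_vecMul, hxBinv, Matrix.smul_vecMul, hxQ, smul_zero]
    calc (Qᵀ * B * Q) * (Qᵀ * B⁻¹ * Q)
        = Qᵀ * B * ((Q * Qᵀ) * (B⁻¹ * Q)) := by
          simp only [Matrix.mul_assoc]
      _ = Qᵀ * B * (B⁻¹ * Q - Matrix.vecMulVec x x * (B⁻¹ * Q)) := by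
          rw [hQ2, Matrix.sub_mul, Matrix.one_mul]
      _ = Qᵀ * B * (B⁻¹ * Q) := by
          rw [vecMulVec_mul_aux, hxBQ, hv0, sub_zero]
      _ = Qᵀ * (B * B⁻¹) * Q := by simp only [Matrix.mul_assoc]
      _ = 1 := by rw [hBB, Matrix.mul_one, hQ1]
  have hleft : (Qᵀ * B⁻¹ * Q) * (Qᵀ * B * Q) = 1 := by
    have hxBQ : x ᵥ* (B * Q) = 0 := by
      rw [← Matrix.vecMul_vecMul, hxB, Matrix.smul_vecMul, hxQ, smul_zero]
    calc (Qᵀ * B⁻¹ * Q) * (Qᵀ * B * Q)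
        = Qᵀ * B⁻¹ * ((Q * Qᵀ) * (B * Q)) := by
          simp only [Matrix.mul_assoc]
      _ = Qᵀ * B⁻¹ * (B * Q - Matrix.vecMulVec x x * (B * Q)) := by
          rw [hQ2, Matrix.sub_mul, Matrix.one_mul]
      _ = Qᵀ * B⁻¹ * (B * Q) := by
          rw [vecMulVec_mul_aux, hxBQ, hv0, sub_zero]
      _ = Qᵀ * (B⁻¹ * B) * Q := by simp only [Matrix.mul_assoc]
      _ = 1 := by rw [hBB', Matrix.mul_one, hQ1]
  rw [hMB]
  refine ⟨(Matrix.isUnit_iff_isUnit_det _).2 (Matrix.isUnit_det_of_right_inverse hright), ?_⟩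
  exact Matrix.inv_eq_right_inv hright
end

section
/- Let A ∈ ℝ^{n×n}, let x ∈ ℝⁿ be a unit vector with xᵀA = λxᵀ for some λ ∈ ℝ, let Q ∈ ℝ^{n×(n−1)} satisfy QᵀQ = I_{n−1} and QQᵀ = I_n − x xᵀ, and let b ∈ ℝⁿ with xᵀb = 0. Then for every integer k ≥ 0, (QᵀAQ)ᵏ (Qᵀ b) = Qᵀ (Aᵏ b); consequently the polynomial Krylov subspace span{Qᵀb, (QᵀAQ)Qᵀb, …, (QᵀAQ)^{k−1}Qᵀb} equals the image under Qᵀ of span{b, Ab, …, A^{k−1}b}. -/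
/-!
Because `x` is a left eigenvector of `A`, the hyperplane `x ⬝ᵥ v = 0` is `A`-invariant, so it
contains every `Aᵏ b`; there the projector `Q Qᵀ = 1 - x xᵀ` acts as the identity, and it can be
inserted between consecutive factors of `Aᵏ⁺¹ b` to peel off one factor `Qᵀ A Q` at a time.
-/

open Matrix

namespace Matrix

section LeftEigenvector

variable {α n : Type*} [CommSemiring α] [Fintype n] {A : Matrix n n α} {x v : n → α} {c : α}

theorem dotProduct_mulVec_eq_zero_of_vecMul_eq_smul (hxA : x ᵥ* A = c • x)
    (hv : x ⬝ᵥ v = 0) : x ⬝ᵥ (A *ᵥ v) = 0 := by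
  rw [dotProduct_mulVec, hxA, smul_dotProduct, hv, smul_zero]

theorem dotProduct_pow_mulVec_eq_zero_of_vecMul_eq_smul [DecidableEq n] (hxA : x ᵥ* A = c • x)
    (hv : x ⬝ᵥ v = 0) (k : ℕ) : x ⬝ᵥ (A ^ k *ᵥ v) = 0 := by
  induction k with
  | zero => simpa using hv
  | succ k ih =>
    rw [pow_succ', ← mulVec_mulVec]
    exact dotProduct_mulVec_eq_zero_of_vecMul_eq_smul hxA ih

end LeftEigenvector

theorem one_sub_vecMulVec_mulVec_of_dotProduct_eq_zero {α n : Type*} [Ring α] [Fintype n]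
    [DecidableEq n] {x v : n → α} (hv : x ⬝ᵥ v = 0) : (1 - vecMulVec x x) *ᵥ v = v := by
  rw [sub_mulVec, one_mulVec, vecMulVec_mulVec, hv, MulOpposite.op_zero, zero_smul, sub_zero]

theorem pow_mulVec_mulVec_eq_mulVec_pow_mulVec {α m n : Type*} [Semiring α]
    [Fintype m] [DecidableEq m] [Fintype n] [DecidableEq n]
    {A : Matrix n n α} {P : Matrix n m α} {R : Matrix m n α} {b : n → α}
    (hfix : ∀ k : ℕ, (P * R) *ᵥ (A ^ k *ᵥ b) = A ^ k *ᵥ b) (k : ℕ) :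
    (R * A * P) ^ k *ᵥ (R *ᵥ b) = R *ᵥ (A ^ k *ᵥ b) := by
  induction k with
  | zero => simp
  | succ k ih =>
    calc (R * A * P) ^ (k + 1) *ᵥ (R *ᵥ b)
        = (R * A) *ᵥ ((P * R) *ᵥ (A ^ k *ᵥ b)) := by
          rw [pow_succ', ← mulVec_mulVec, ih]
          simp only [mulVec_mulVec, Matrix.mul_assoc]
      _ = R *ᵥ (A ^ (k + 1) *ᵥ b) := by
          rw [hfix, pow_succ', ← mulVec_mulVec, ← mulVec_mulVec]

end Matrix

theorem Submodule.span_setOf_lt_eq_map_span {S M N : Type*} [Semiring S] [AddCommMonoid M]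
    [AddCommMonoid N] [Module S M] [Module S N] (f : M →ₗ[S] N) {u : ℕ → M} {w : ℕ → N}
    (hf : ∀ j, f (u j) = w j) (k : ℕ) :
    span S {v | ∃ j < k, v = w j} = (span S {v | ∃ j < k, v = u j}).map f := by
  rw [map_span]
  congr 1
  ext v
  constructor
  · rintro ⟨j, hj, rfl⟩
    exact ⟨u j, ⟨j, hj, rfl⟩, hf j⟩
  · rintro ⟨_, ⟨j, hj, rfl⟩, rfl⟩
    exact ⟨j, hj, hf j⟩

theorem projected_krylov_powers_general {n : ℕ}
    (A : Matrix (Fin n) (Fin n) ℝ) (x : Fin n → ℝ)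
    (lam : ℝ) (hxA : x ᵥ* A = lam • x)
    (Q : Matrix (Fin n) (Fin (n - 1)) ℝ)
    (hQ2 : Q * Qᵀ = 1 - Matrix.vecMulVec x x)
    (b : Fin n → ℝ) (hb : x ⬝ᵥ b = 0) :
    (∀ k : ℕ, ((Qᵀ * A * Q) ^ k) *ᵥ (Qᵀ *ᵥ b) = Qᵀ *ᵥ ((A ^ k) *ᵥ b)) ∧
      ∀ k : ℕ,
        Submodule.span ℝ {v : Fin (n - 1) → ℝ |
            ∃ j < k, v = ((Qᵀ * A * Q) ^ j) *ᵥ (Qᵀ *ᵥ b)}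
          = Submodule.map (Matrix.mulVecLin Qᵀ)
              (Submodule.span ℝ {v : Fin n → ℝ | ∃ j < k, v = (A ^ j) *ᵥ b}) := by
  have hpow : ∀ k : ℕ, (Qᵀ * A * Q) ^ k *ᵥ (Qᵀ *ᵥ b) = Qᵀ *ᵥ (A ^ k *ᵥ b) :=
    pow_mulVec_mulVec_eq_mulVec_pow_mulVec fun k => by
      rw [hQ2]
      exact one_sub_vecMulVec_mulVec_of_dotProduct_eq_zero
        (dotProduct_pow_mulVec_eq_zero_of_vecMul_eq_smul hxA hb k)
  exact ⟨hpow, Submodule.span_setOf_lt_eq_map_span (mulVecLin Qᵀ) fun j => (hpow j).symm⟩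

/-- Projected powers identity: `(Qᵀ A Q)ᵏ (Qᵀ b) = Qᵀ (Aᵏ b)` for all `k`, and hence
the polynomial Krylov subspace of `(Qᵀ A Q, Qᵀ b)` is the image under `Qᵀ` of the
polynomial Krylov subspace of `(A, b)`. -/
theorem projected_krylov_powers {n : ℕ}
    (A : Matrix (Fin n) (Fin n) ℝ) (x : Fin n → ℝ) (hx : x ⬝ᵥ x = 1)
    (lam : ℝ) (hxA : x ᵥ* A = lam • x)
    (Q : Matrix (Fin n) (Fin (n - 1)) ℝ)
    (hQ1 : Qᵀ * Q = 1)
    (hQ2 : Q * Qᵀ = 1 - Matrix.vecMulVec x x)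
    (b : Fin n → ℝ) (hb : x ⬝ᵥ b = 0) :
    (∀ k : ℕ, ((Qᵀ * A * Q) ^ k) *ᵥ (Qᵀ *ᵥ b) = Qᵀ *ᵥ ((A ^ k) *ᵥ b)) ∧
      ∀ k : ℕ,
        Submodule.span ℝ {v : Fin (n - 1) → ℝ |
            ∃ j < k, v = ((Qᵀ * A * Q) ^ j) *ᵥ (Qᵀ *ᵥ b)}
          = Submodule.map (Matrix.mulVecLin Qᵀ)
              (Submodule.span ℝ {v : Fin n → ℝ | ∃ j < k, v = (A ^ j) *ᵥ b}) :=
  projected_krylov_powers_general A x lam hxA Q hQ2 b hb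
end

section
/- Let A ∈ ℝ^{n×n}, let x ∈ ℝⁿ be a unit vector with xᵀA = λxᵀ for some λ ∈ ℝ, and let Q ∈ ℝ^{n×(n−1)} satisfy QᵀQ = I_{n−1} and QQᵀ = I_n − x xᵀ. Let ξ ∈ ℝ with ξ ≠ λ and A − ξI invertible. Then for every w ∈ ℝⁿ with xᵀw = 0, (QᵀAQ − ξ I_{n−1})⁻¹ (QᵀAQ)(Qᵀ w) = Qᵀ ((A − ξ I_n)⁻¹ A w). -/
open Matrix

lemma vmv_mul {n k : ℕ} (v w : Fin n → ℝ) (N : Matrix (Fin n) (Fin k) ℝ) :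
    vecMulVec v w * N = vecMulVec v (w ᵥ* N) := by
  ext i j
  simp [Matrix.mul_apply, vecMulVec_apply, vecMul, dotProduct, Finset.mul_sum, mul_assoc]

lemma vmv_mulVec {n : ℕ} (v w u : Fin n → ℝ) :
    vecMulVec v w *ᵥ u = (w ⬝ᵥ u) • v := by
  ext i
  simp [mulVec, vecMulVec_apply, dotProduct, Finset.mul_sum, mul_comm, mul_assoc, mul_left_comm]

/-- Continuation-vector identity for projected Krylov subspaces:
`(Qᵀ A Q - ξ I)⁻¹ (Qᵀ A Q)(Qᵀ w) = Qᵀ ((A - ξ I)⁻¹ A w)` for every `w ⊥ x`. -/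
theorem projected_continuation_vector {n : ℕ}
    (A : Matrix (Fin n) (Fin n) ℝ) (x : Fin n → ℝ) (hx : x ⬝ᵥ x = 1)
    (lam : ℝ) (hxA : x ᵥ* A = lam • x)
    (Q : Matrix (Fin n) (Fin (n - 1)) ℝ)
    (hQ1 : Qᵀ * Q = 1)
    (hQ2 : Q * Qᵀ = 1 - Matrix.vecMulVec x x)
    (ξ : ℝ) (hξ : ξ ≠ lam)
    (hinv : IsUnit (A - ξ • (1 : Matrix (Fin n) (Fin n) ℝ)))
    (w : Fin n → ℝ) (hw : x ⬝ᵥ w = 0) :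
    (Qᵀ * A * Q - ξ • (1 : Matrix (Fin (n - 1)) (Fin (n - 1)) ℝ))⁻¹ *ᵥ
        ((Qᵀ * A * Q) *ᵥ (Qᵀ *ᵥ w))
      = Qᵀ *ᵥ ((A - ξ • (1 : Matrix (Fin n) (Fin n) ℝ))⁻¹ *ᵥ (A *ᵥ w)) := by
  set M := A - ξ • (1 : Matrix (Fin n) (Fin n) ℝ) with hM
  have hlam : lam - ξ ≠ 0 := sub_ne_zero.mpr (Ne.symm hξ)
  have hMM : M * M⁻¹ = 1 :=
    Matrix.mul_nonsing_inv _ ((Matrix.isUnit_iff_isUnit_det M).mp hinv)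
  have hxM : x ᵥ* M = (lam - ξ) • x := by
    have h0 : x ᵥ* (ξ • (1 : Matrix (Fin n) (Fin n) ℝ)) = ξ • x := by
      ext j; simp [Matrix.vecMul, dotProduct, Matrix.one_apply, mul_comm]
    rw [hM, Matrix.vecMul_sub, hxA, h0, sub_smul]
  -- x ᵥ* Q = 0
  have hxQQ : x ᵥ* (Q * Qᵀ) = 0 := by
    rw [hQ2]
    have : x ᵥ* vecMulVec x x = (x ⬝ᵥ x) • x := by
      ext j; simp [vecMul, vecMulVec_apply, dotProduct, Finset.sum_mul, mul_assoc]
    simp [Matrix.vecMul_sub, this, hx]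
  have hxQ : x ᵥ* Q = 0 := by
    have h1 : x ᵥ* (Q * (Qᵀ * Q)) = x ᵥ* Q := by rw [hQ1]; simp
    have h2 : x ᵥ* (Q * (Qᵀ * Q)) = (x ᵥ* (Q * Qᵀ)) ᵥ* Q := by
      rw [← Matrix.mul_assoc, Matrix.vecMul_vecMul]
    rw [h2, hxQQ] at h1
    simpa using h1.symm
  -- x ᵥ* M⁻¹
  have hxMinv : x ᵥ* M⁻¹ = (lam - ξ)⁻¹ • x := by
    have h1 : x ᵥ* (M * M⁻¹) = x := by rw [hMM]; simp
    have h2 : x ᵥ* (M * M⁻¹) = (lam - ξ) • (x ᵥ* M⁻¹) := by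
      rw [← Matrix.vecMul_vecMul, hxM, Matrix.smul_vecMul]
    rw [h2] at h1
    have := congrArg (fun v => (lam - ξ)⁻¹ • v) h1
    simpa [smul_smul, inv_mul_cancel₀ hlam] using this
  have hQAQ : Qᵀ * A * Q - ξ • (1 : Matrix (Fin (n - 1)) (Fin (n - 1)) ℝ) = Qᵀ * M * Q := by
    rw [hM]
    rw [Matrix.mul_sub, Matrix.sub_mul]
    congr 1
    rw [Matrix.mul_smul, Matrix.smul_mul, Matrix.mul_one, hQ1]
  set C := Qᵀ * M⁻¹ * Q with hC
  have hright : (Qᵀ * A * Q - ξ • (1 : Matrix (Fin (n - 1)) (Fin (n - 1)) ℝ)) * C = 1 := by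
    rw [hQAQ, hC]
    have hxMQ : x ᵥ* (M⁻¹ * Q) = 0 := by
      rw [← Matrix.vecMul_vecMul, hxMinv, Matrix.smul_vecMul, hxQ, smul_zero]
    calc Qᵀ * M * Q * (Qᵀ * M⁻¹ * Q)
        = Qᵀ * M * (Q * Qᵀ) * (M⁻¹ * Q) := by simp only [Matrix.mul_assoc]
      _ = Qᵀ * M * (1 - vecMulVec x x) * (M⁻¹ * Q) := by rw [hQ2]
      _ = Qᵀ * (M * (M⁻¹ * Q)) - Qᵀ * M * (vecMulVec x x * (M⁻¹ * Q)) := by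
            rw [Matrix.mul_sub, Matrix.mul_one, Matrix.sub_mul, Matrix.mul_assoc,
              Matrix.mul_assoc (Qᵀ * M), Matrix.mul_assoc Qᵀ M]
      _ = 1 := by
            rw [vmv_mul, hxMQ, ← Matrix.mul_assoc Qᵀ M, ← Matrix.mul_assoc (Qᵀ * M) M⁻¹, Matrix.mul_assoc Qᵀ M M⁻¹, hMM]
            have hz : vecMulVec x (0 : Fin (n-1) → ℝ) = 0 := by ext i j; simp [vecMulVec_apply]
            simp [hz, hQ1]
  have hBinv : (Qᵀ * A * Q - ξ • (1 : Matrix (Fin (n - 1)) (Fin (n - 1)) ℝ))⁻¹ = C :=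
    Matrix.inv_eq_right_inv hright
  rw [hBinv, hC]
  -- now pure vector computation
  have hAw : x ⬝ᵥ (A *ᵥ w) = 0 := by
    rw [Matrix.dotProduct_mulVec, hxA]
    simp [hw]
  have hQQw : (Q * Qᵀ) *ᵥ w = w := by
    rw [hQ2, Matrix.sub_mulVec, vmv_mulVec, hw]
    simp
  have hQQAw : (Q * Qᵀ) *ᵥ (A *ᵥ w) = A *ᵥ w := by
    rw [hQ2, Matrix.sub_mulVec, vmv_mulVec, hAw]
    simp
  calc (Qᵀ * M⁻¹ * Q) *ᵥ ((Qᵀ * A * Q) *ᵥ (Qᵀ *ᵥ w))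
      = Qᵀ *ᵥ (M⁻¹ *ᵥ ((Q * Qᵀ) *ᵥ (A *ᵥ ((Q * Qᵀ) *ᵥ w)))) := by
        simp only [← Matrix.mulVec_mulVec, Matrix.mul_assoc]
    _ = Qᵀ *ᵥ (M⁻¹ *ᵥ (A *ᵥ w)) := by rw [hQQw, hQQAw]
end
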